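/- If $W=\{(W_i,\omega_i)\}_{i\in I}$ is a fusion Riesz basis, then the operator $\phi_{WW}$ on $(\sum_{i\in I}\oplus W_i)_{\ell^2}$ defined by $\phi_{WW}(\{f_i\}) = \{\pi_{W_i}S_W^{-1}f_i\}$ acts diagonally as $\phi_{WW}(\{f_i\}) = \{\omega_i^{-2}f_i\}$; in particular $\phi_{WW}$ is invertible with inverse $\{f_i\}\mapsto\{\omega_i^2 f_i\}$. -/

import Mathlib

/-! If `S_W h = g` with `g ∈ W_j`, then `∑ᵢ ωᵢ (ωᵢ π_{Wᵢ} h - δᵢⱼ ωⱼ⁻¹ g) = 0` is an expansion of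
zero along the fusion Riesz basis, so the lower Riesz bound kills every term. This is the
relation `ωᵢ² π_{Wᵢ} S_W⁻¹ π_{Wⱼ} = δᵢⱼ π_{Wⱼ}`, and it makes `φ_WW` multiplication by `ωᵢ⁻²`.
The upper Riesz bound gives `ωᵢ² ≤ D` on every nonzero `Wᵢ`, so multiplication by `ωᵢ²` is a
bounded operator on the `ℓ²`-sum, and it inverts `φ_WW`. -/

open scoped InnerProductSpace
open ContinuousLinearMap (adjoint)
set_option maxHeartbeats 1000000
set_option synthInstance.maxHeartbeats 400000
noncomputable section

variable {H : Type*} [NormedAddCommGroup H] [InnerProductSpace ℂ H] [CompleteSpace H]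
variable {ι : Type*} [Countable ι]

/-- The orthogonal projection onto a closed subspace, as an endomorphism of `H`. -/
noncomputable def projL (W : Submodule ℂ H) [CompleteSpace W] : H →L[ℂ] H :=
  W.subtypeL.comp (Submodule.orthogonalProjection W)

/-- `{(W i, ω i)}` is a fusion frame with bounds `A ≤ B`. -/
def IsFusionFrame (W : ι → Submodule ℂ H) [∀ i, CompleteSpace (W i)]
    (ω : ι → ℝ) (A B : ℝ) : Prop :=
  ∀ f : H, ∃ s : ℝ,
    HasSum (fun i => (ω i) ^ 2 * ‖(Submodule.orthogonalProjection (W i) f : H)‖ ^ 2) s ∧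
    A * ‖f‖ ^ 2 ≤ s ∧ s ≤ B * ‖f‖ ^ 2

/-- `{(W i, ω i)}` is a Bessel fusion sequence with bound `B`. -/
def IsBesselFusion (W : ι → Submodule ℂ H) [∀ i, CompleteSpace (W i)]
    (ω : ι → ℝ) (B : ℝ) : Prop :=
  ∀ f : H, ∃ s : ℝ,
    HasSum (fun i => (ω i) ^ 2 * ‖(Submodule.orthogonalProjection (W i) f : H)‖ ^ 2) s ∧
    s ≤ B * ‖f‖ ^ 2

/-- `{(W i, ω i)}` is a fusion Riesz basis with bounds `C ≤ D`. -/
def IsFusionRieszBasisWith (W : ι → Submodule ℂ H) (ω : ι → ℝ) (C D : ℝ) : Prop :=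
  (⨆ i, W i).topologicalClosure = ⊤ ∧ 0 < C ∧ C ≤ D ∧
  ∀ (J : Finset ι) (g : ∀ i, W i),
    C * ∑ j ∈ J, ‖(g j : H)‖ ^ 2 ≤ ‖∑ j ∈ J, ω j • ((g j : H))‖ ^ 2 ∧
    ‖∑ j ∈ J, ω j • ((g j : H))‖ ^ 2 ≤ D * ∑ j ∈ J, ‖(g j : H)‖ ^ 2

/-- `{(W i, ω i)}` is a fusion Riesz basis. -/
def IsFusionRieszBasis (W : ι → Submodule ℂ H) (ω : ι → ℝ) : Prop :=
  ∃ C D : ℝ, IsFusionRieszBasisWith W ω C D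

open Filter Topology Finset

theorem eq_zero_of_hasSum_zero_of_lower_bound {κ E F : Type*} [NormedAddCommGroup E]
    [NormedAddCommGroup F] {C : ℝ} (hC : 0 < C) {x : κ → E} {v : κ → F}
    (hlow : ∀ J : Finset κ, C * ∑ j ∈ J, ‖v j‖ ^ 2 ≤ ‖∑ j ∈ J, x j‖ ^ 2) (hx : HasSum x 0) :
    v = 0 := by
  funext i
  have hlim : Tendsto (fun J : Finset κ => ‖∑ j ∈ J, x j‖ ^ 2) atTop (𝓝 0) := by
    simpa using hx.norm.pow 2
  have hCv : C * ‖v i‖ ^ 2 ≤ 0 := by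
    refine ge_of_tendsto hlim ((eventually_ge_atTop {i}).mono fun J hJ => (hlow J).trans' ?_)
    gcongr
    exact single_le_sum (fun j _ => sq_nonneg ‖v j‖) (singleton_subset_iff.mp hJ)
  have : ‖v i‖ ^ 2 ≤ 0 := nonpos_of_mul_nonpos_right hCv hC
  simpa using this

section FusionRieszBasis

variable {E κ : Type*} [NormedAddCommGroup E] [InnerProductSpace ℂ E]
  {W : κ → Submodule ℂ E} {ω : κ → ℝ} {C D : ℝ}

theorem IsFusionRieszBasisWith.upper_nonneg (hW : IsFusionRieszBasisWith W ω C D) : 0 ≤ D :=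
  hW.2.1.le.trans hW.2.2.1

theorem IsFusionRieszBasisWith.eq_zero_of_hasSum (hW : IsFusionRieszBasisWith W ω C D)
    {v : κ → E} (hv : ∀ i, v i ∈ W i) (hsum : HasSum (fun i => ω i • v i) 0) : v = 0 :=
  eq_zero_of_hasSum_zero_of_lower_bound hW.2.1 (fun J => (hW.2.2.2 J fun i => ⟨v i, hv i⟩).1)
    hsum

theorem IsFusionRieszBasisWith.sq_mul_norm_le (hW : IsFusionRieszBasisWith W ω C D) (i : κ)
    (x : W i) : ω i ^ 2 * ‖(x : E)‖ ≤ D * ‖(x : E)‖ := by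
  classical
  rcases (norm_nonneg (x : E)).eq_or_lt with hx | hx
  · simp [← hx]
  have hsingle := (hW.2.2.2 {i} (Pi.single i x)).2
  simp only [sum_singleton, Pi.single_eq_same, norm_smul, mul_pow, Real.norm_eq_abs, sq_abs]
    at hsingle
  exact le_of_mul_le_mul_right (by linarith) hx

theorem IsFusionRieszBasisWith.orthogonalProjectionOnto_eq_of_hasSum
    [∀ i, CompleteSpace (W i)] (hW : IsFusionRieszBasisWith W ω C D) {j : κ} (hωj : ω j ≠ 0)
    {h g : E} (hg : g ∈ W j)
    (hsum : HasSum (fun i => ω i ^ 2 • ((W i).orthogonalProjectionOnto h : E)) g) :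
    ((W j).orthogonalProjectionOnto h : E) = (ω j ^ 2)⁻¹ • g := by
  classical
  set v : κ → E := fun i =>
    ω i • ((W i).orthogonalProjectionOnto h : E) - (ω i)⁻¹ • (Pi.single j g : κ → E) i
  have hsingle_mem : ∀ i, (Pi.single j g : κ → E) i ∈ W i := fun i => by
    rcases eq_or_ne i j with rfl | hij
    · simpa using hg
    · simp [hij]
  have hv : ∀ i, v i ∈ W i := fun i =>
    sub_mem ((W i).smul_of_tower_mem _ (Submodule.coe_mem _))
      ((W i).smul_of_tower_mem _ (hsingle_mem i))
  have hωv : (fun i => ω i • v i) =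
      fun i => ω i ^ 2 • ((W i).orthogonalProjectionOnto h : E) - (Pi.single j g : κ → E) i := by
    funext i
    rcases eq_or_ne i j with rfl | hij
    · simp [v, smul_sub, smul_smul, sq, hωj]
    · simp [v, hij, smul_smul, sq]
  have hvj := congrFun (hW.eq_zero_of_hasSum hv
    (by rw [hωv, ← sub_self g]; exact hsum.sub (hasSum_pi_single j g))) j
  simp only [v, Pi.single_eq_same, Pi.zero_apply, sub_eq_zero] at hvj
  calc ((W j).orthogonalProjectionOnto h : E)
      = (ω j)⁻¹ • ω j • ((W j).orthogonalProjectionOnto h : E) := (inv_smul_smul₀ hωj _).symm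
    _ = (ω j ^ 2)⁻¹ • g := by rw [hvj, smul_smul, ← mul_inv, sq]

theorem IsFusionRieszBasisWith.norm_sq_smul_id_le (hW : IsFusionRieszBasisWith W ω C D)
    (i : κ) : ‖ω i ^ 2 • ContinuousLinearMap.id ℂ (W i)‖ ≤ D := by
  refine ContinuousLinearMap.opNorm_le_bound _ hW.upper_nonneg fun x => ?_
  simpa [norm_smul] using hW.sq_mul_norm_le i x

end FusionRieszBasis

/-- for a fusion Riesz basis `W`, the operator `φ_WW` acts diagonally as
`{fᵢ} ↦ {ωᵢ⁻² fᵢ}`, and is invertible with inverse `{fᵢ} ↦ {ωᵢ² fᵢ}`. -/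
theorem stmt13 (W : ι → Submodule ℂ H) [∀ i, CompleteSpace (W i)]
    (ω : ι → ℝ) (hω : ∀ i, 0 < ω i)
    (hriesz : IsFusionRieszBasis W ω)
    (SW SWinv : H →L[ℂ] H)
    (hSW : ∀ f, HasSum (fun i => (ω i) ^ 2 • ((Submodule.orthogonalProjection (W i) f : H))) (SW f))
    (hSWinv : SW.comp SWinv = 1 ∧ SWinv.comp SW = 1)
    (φ : lp (fun i => ↥(W i)) 2 →L[ℂ] lp (fun i => ↥(W i)) 2)
    (hφ : ∀ f i, ((φ f) i : H) = (Submodule.orthogonalProjection (W i) (SWinv ((f i : H))) : H)) :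
    (∀ f i, ((φ f) i : H) = ((ω i) ^ 2)⁻¹ • ((f i : H))) ∧
    ∃ ψ : lp (fun i => ↥(W i)) 2 →L[ℂ] lp (fun i => ↥(W i)) 2,
      φ ∘L ψ = 1 ∧ ψ ∘L φ = 1 ∧ ∀ f i, ((ψ f) i : H) = (ω i) ^ 2 • ((f i : H)) := by
  obtain ⟨C, D, hW⟩ := hriesz
  have hSW_SWinv (x : H) : SW (SWinv x) = x := by
    simpa using congr($(hSWinv.1) x)
  have hφ_diag (f : lp (fun i => ↥(W i)) 2) (i : ι) :
      ((φ f) i : H) = ((ω i) ^ 2)⁻¹ • ((f i : H)) := by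
    rw [hφ]
    refine hW.orthogonalProjectionOnto_eq_of_hasSum (hω i).ne' (f i).2 ?_
    simpa [hSW_SWinv] using hSW (SWinv (f i))
  refine ⟨hφ_diag, lp.mapCLM 2 (fun i => ω i ^ 2 • ContinuousLinearMap.id ℂ (W i))
    hW.upper_nonneg hW.norm_sq_smul_id_le, ?_, ?_, fun f i => by simp⟩
  all_goals
    ext f i
    simp [hφ_diag, smul_smul, (hω i).ne']
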